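/- Let (X_1,Y_1), …, (X_n,Y_n) be i.i.d. pairs of finitely-valued random variables, and let F_x = f_x(X^n) and F_y = f_y(Y^n) for arbitrary functions f_x, f_y. Then I(Y^n; F_x, F_y) ≥ I(X^n; F_x, F_y) − n·H(X_1) + Σ_{i=1}^n I(Y_i; X_i, F_y, Y^{i−1}), where Y^{i−1} = (Y_1, …, Y_{i−1}). -/

import Mathlib

open scoped BigOperators

/-- A probability mass function on a finite type, real-valued. -/
structure FinPMF (α : Type) [Fintype α] where
  p : α → ℝ
  nonneg : ∀ a, 0 ≤ p a
  sum_one : ∑ a, p a = 1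

namespace FinPMF

variable {Ω : Type} [Fintype Ω]

/-- The distribution (pushforward pmf) of a finitely-valued random variable. -/
def dist {α : Type} [Fintype α] [DecidableEq α] (μ : FinPMF Ω) (X : Ω → α) (a : α) : ℝ :=
  ∑ ω, if X ω = a then μ.p ω else 0

/-- Shannon entropy `H(X)` (natural logarithm). -/
noncomputable def H {α : Type} [Fintype α] [DecidableEq α] (μ : FinPMF Ω) (X : Ω → α) : ℝ :=
  -∑ a, dist μ X a * Real.log (dist μ X a)

/-- Mutual information `I(X;Y)`. -/
noncomputable def MI {α β : Type} [Fintype α] [DecidableEq α] [Fintype β] [DecidableEq β]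
    (μ : FinPMF Ω) (X : Ω → α) (Y : Ω → β) : ℝ :=
  H μ X + H μ Y - H μ (fun ω => (X ω, Y ω))

/-- Conditional entropy `H(X|Y)`. -/
noncomputable def condH {α β : Type} [Fintype α] [DecidableEq α] [Fintype β] [DecidableEq β]
    (μ : FinPMF Ω) (X : Ω → α) (Y : Ω → β) : ℝ :=
  H μ (fun ω => (X ω, Y ω)) - H μ Y

/-- Conditional mutual information `I(X;Y|Z)`. -/
noncomputable def condMI {α β γ : Type} [Fintype α] [DecidableEq α] [Fintype β] [DecidableEq β]
    [Fintype γ] [DecidableEq γ] (μ : FinPMF Ω) (X : Ω → α) (Y : Ω → β) (Z : Ω → γ) : ℝ :=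
  condH μ X Z + condH μ Y Z - condH μ (fun ω => (X ω, Y ω)) Z

open scoped Classical in
/-- Probability of an event. -/
noncomputable def prob (μ : FinPMF Ω) (S : Ω → Prop) : ℝ :=
  ∑ ω, if S ω then μ.p ω else 0

/-- Conditional independence: `A` and `C` are conditionally independent given `B`
(the Markov chain `A ↔ B ↔ C`). -/
def CondIndep {α β γ : Type} [Fintype α] [DecidableEq α] [Fintype β] [DecidableEq β]
    [Fintype γ] [DecidableEq γ] (μ : FinPMF Ω) (A : Ω → α) (B : Ω → β) (C : Ω → γ) : Prop :=
  ∀ a b c, dist μ (fun ω => (A ω, B ω, C ω)) (a, b, c) * dist μ B b =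
    dist μ (fun ω => (A ω, B ω)) (a, b) * dist μ (fun ω => (B ω, C ω)) (b, c)

/-- The i.i.d. product pmf on `Fin n → Ω`. -/
def iid (μ : FinPMF Ω) (n : ℕ) : FinPMF (Fin n → Ω) where
  p := fun ω => ∏ i, μ.p (ω i)
  nonneg := fun ω => Finset.prod_nonneg fun i _ => μ.nonneg _
  sum_one := by
    have h := Finset.prod_univ_sum (fun _ : Fin n => (Finset.univ : Finset Ω))
      (fun _ a => μ.p a)
    rw [Fintype.piFinset_univ] at h
    rw [← h]
    simp [μ.sum_one]

/-- The product of two pmfs. -/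
def prodPMF {α β : Type} [Fintype α] [Fintype β] (μ : FinPMF α) (ν : FinPMF β) :
    FinPMF (α × β) where
  p := fun ab => μ.p ab.1 * ν.p ab.2
  nonneg := fun ab => mul_nonneg (μ.nonneg _) (ν.nonneg _)
  sum_one := by
    rw [Fintype.sum_prod_type]
    simp_rw [← Finset.mul_sum, ν.sum_one, mul_one]
    exact μ.sum_one

/-- The uniform pmf on a nonempty finite type. -/
noncomputable def uniform (α : Type) [Fintype α] (h : Nonempty α) : FinPMF α where
  p := fun _ => (Fintype.card α : ℝ)⁻¹
  nonneg := fun _ => by positivity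
  sum_one := by
    have hc : (0:ℝ) < Fintype.card α := by
      exact_mod_cast Fintype.card_pos_iff.mpr h
    simp only [Finset.sum_const, Finset.card_univ, nsmul_eq_mul]
    field_simp

/-- The pushforward pmf of a random variable. -/
def push {α : Type} [Fintype α] [DecidableEq α] (μ : FinPMF Ω) (X : Ω → α) : FinPMF α where
  p := dist μ X
  nonneg := fun a => Finset.sum_nonneg fun ω _ => by
    split <;> simp [μ.nonneg]
  sum_one := by
    unfold dist
    rw [Finset.sum_comm]
    simp [μ.sum_one]

end FinPMF

/-!
Write `F = (F_x, F_y)` and `W = (X^n, F_y)`. Then `(X^n, F)` is a relabelling of `W`, `(Y^n, F)` is a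
function of `(W, Y^n)`, and `H(X^n) = n H(X_1)` because the `X_i` are i.i.d., so it suffices to show
`Σ_i I(Y_i; X_i, F_y, Y^{i-1}) ≤ H(Y^n) + H(W) - H(W, Y^n)`. By data processing each summand is at
most `I(Y_i; W, Y^{i-1})`; by the chain rule these add up to `Σ_i H(Y_i) + H(W) - H(W, Y^n)`, and
`Σ_i H(Y_i) = H(Y^n)` since the `Y_i` are independent.

All entropy inequalities are derived from `H(X) = -E[log p_X(X)]`; data processing comes from
submodularity of entropy, which is Gibbs' inequality against `p(a, c) p(b, c) / p(c)`.
-/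

namespace FinPMF

section

open Real

variable {Ω α β γ : Type} [Fintype Ω] [Fintype α] [Fintype β] [Fintype γ] (μ : FinPMF Ω)

section Entropy

variable [DecidableEq α] [DecidableEq β] [DecidableEq γ]

lemma dist_nonneg (X : Ω → α) (a : α) : 0 ≤ dist μ X a :=
  Finset.sum_nonneg fun ω _ => by split_ifs <;> simp [μ.nonneg]

lemma sum_dist_mul (X : Ω → α) (f : α → ℝ) :
    ∑ a, dist μ X a * f a = ∑ ω, μ.p ω * f (X ω) := by
  simp only [dist, Finset.sum_mul, ite_mul, zero_mul]
  rw [Finset.sum_comm]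
  simp

lemma sum_dist (X : Ω → α) : ∑ a, dist μ X a = 1 := by
  simpa [μ.sum_one] using sum_dist_mul μ X 1

lemma dist_apply_pos {ω : Ω} (hω : 0 < μ.p ω) (X : Ω → α) : 0 < dist μ X (X ω) := by
  have hterm := Finset.single_le_sum (f := fun ω' => if X ω' = X ω then μ.p ω' else 0)
    (fun ω' _ => by split_ifs <;> simp [μ.nonneg]) (Finset.mem_univ ω)
  rw [if_pos rfl] at hterm
  exact hω.trans_le hterm

lemma dist_le_dist_comp (X : Ω → α) (g : α → β) (a : α) :
    dist μ X a ≤ dist μ (fun ω => g (X ω)) (g a) :=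
  Finset.sum_le_sum fun ω _ => by
    by_cases h : X ω = a
    · simp [h]
    · simp only [h, if_false]; split_ifs <;> simp [μ.nonneg]

lemma sum_dist_pair_left (A : Ω → α) (B : Ω → β) (b : β) :
    ∑ a, dist μ (fun ω => (A ω, B ω)) (a, b) = dist μ B b := by
  simp only [dist]
  rw [Finset.sum_comm]
  refine Finset.sum_congr rfl fun ω _ => ?_
  by_cases h : B ω = b <;> simp [h]

lemma dist_comp_of_dist_eq {ν : FinPMF α} {X : Ω → α} (h : dist μ X = ν.p) (g : α → β) :
    dist μ (fun ω => g (X ω)) = dist ν g := by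
  funext b
  calc dist μ (fun ω => g (X ω)) b = ∑ ω, μ.p ω * if g (X ω) = b then 1 else 0 := by simp [dist]
    _ = ∑ a, dist μ X a * if g a = b then 1 else 0 :=
      (sum_dist_mul μ X fun a => if g a = b then 1 else 0).symm
    _ = dist ν g b := by rw [h]; simp [dist]

lemma H_eq_neg_sum_mul_log (X : Ω → α) :
    H μ X = -∑ ω, μ.p ω * log (dist μ X (X ω)) := by
  rw [H, sum_dist_mul]

lemma H_eq_of_dist_eq {Ω' : Type} [Fintype Ω'] {ν : FinPMF Ω'} {X : Ω → α} {X' : Ω' → α}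
    (h : dist μ X = dist ν X') : H μ X = H ν X' := by
  rw [H, H, h]

lemma H_comp_le (X : Ω → α) (g : α → β) : H μ (fun ω => g (X ω)) ≤ H μ X := by
  simp only [H_eq_neg_sum_mul_log, neg_le_neg_iff]
  refine Finset.sum_le_sum fun ω _ => ?_
  rcases (μ.nonneg ω).eq_or_lt with hω | hω
  · simp [← hω]
  · exact mul_le_mul_of_nonneg_left
      (log_le_log (dist_apply_pos μ hω X) (dist_le_dist_comp μ X g (X ω))) hω.le

lemma H_comp_eq_of_leftInverse {g : α → β} {g' : β → α} (hg : Function.LeftInverse g' g)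
    (X : Ω → α) : H μ (fun ω => g (X ω)) = H μ X := by
  refine (H_comp_le μ X g).antisymm ?_
  simpa only [hg _] using H_comp_le μ (fun ω => g (X ω)) g'

/-- Gibbs' inequality. -/
lemma H_le_neg_sum_mul_log (X : Ω → α) (Q : α → ℝ) (hQ : ∀ a, 0 ≤ Q a) (hQ1 : ∑ a, Q a ≤ 1)
    (hpos : ∀ ω, 0 < μ.p ω → 0 < Q (X ω)) :
    H μ X ≤ -∑ ω, μ.p ω * log (Q (X ω)) := by
  rw [H_eq_neg_sum_mul_log]
  have pointwise : ∀ ω, μ.p ω * log (Q (X ω)) - μ.p ω * log (dist μ X (X ω))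
      ≤ μ.p ω * (Q (X ω) / dist μ X (X ω)) - μ.p ω := by
    intro ω
    rcases (μ.nonneg ω).eq_or_lt with hω | hω
    · simp [← hω]
    have hP := dist_apply_pos μ hω X
    have hlog := log_le_sub_one_of_pos (div_pos (hpos ω hω) hP)
    rw [log_div (hpos ω hω).ne' hP.ne'] at hlog
    have := mul_le_mul_of_nonneg_left hlog hω.le
    linarith
  have ratio : ∑ ω, μ.p ω * (Q (X ω) / dist μ X (X ω)) ≤ 1 := by
    rw [← sum_dist_mul μ X fun a => Q a / dist μ X a]
    refine le_trans (Finset.sum_le_sum fun a _ => ?_) hQ1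
    rcases (dist_nonneg μ X a).eq_or_lt with ha | ha
    · simp [← ha, hQ a]
    · rw [mul_div_cancel₀ _ ha.ne']
  have := Finset.sum_le_sum fun ω (_ : ω ∈ Finset.univ) => pointwise ω
  rw [Finset.sum_sub_distrib, Finset.sum_sub_distrib, μ.sum_one] at this
  linarith

lemma H_submodular (A : Ω → α) (B : Ω → β) (C : Ω → γ) :
    H μ (fun ω => (A ω, B ω, C ω)) + H μ C ≤
      H μ (fun ω => (A ω, C ω)) + H μ (fun ω => (B ω, C ω)) := by
  set pAC := dist μ (fun ω => (A ω, C ω))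
  set pBC := dist μ (fun ω => (B ω, C ω))
  set pC := dist μ C
  set Q : α × β × γ → ℝ := fun x => pAC (x.1, x.2.2) * pBC (x.2.1, x.2.2) / pC x.2.2
  have hQ : ∀ x, 0 ≤ Q x := fun x =>
    div_nonneg (mul_nonneg (dist_nonneg μ _ _) (dist_nonneg μ _ _)) (dist_nonneg μ _ _)
  -- no case split on `pC c = 0` is needed: `x * x / x = x` also holds at `x = 0`
  have hQ1 : ∑ x, Q x ≤ 1 := by
    have hAC : ∀ c, ∑ a, pAC (a, c) = pC c := sum_dist_pair_left μ A C
    have hBC : ∀ c, ∑ b, pBC (b, c) = pC c := sum_dist_pair_left μ B C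
    rw [Fintype.sum_prod_type_right, Fintype.sum_prod_type, Finset.sum_comm]
    simp only [Q, ← Finset.sum_div, ← Finset.sum_mul, ← Finset.mul_sum, hAC, hBC,
      mul_self_div_self]
    exact (sum_dist μ C).le
  have hpos : ∀ ω, 0 < μ.p ω → 0 < Q (A ω, B ω, C ω) := fun ω hω =>
    div_pos (mul_pos (dist_apply_pos μ hω _) (dist_apply_pos μ hω _)) (dist_apply_pos μ hω C)
  have cross : ∑ ω, μ.p ω * log (Q (A ω, B ω, C ω)) = ∑ ω, μ.p ω * log (pAC (A ω, C ω))
      + ∑ ω, μ.p ω * log (pBC (B ω, C ω)) - ∑ ω, μ.p ω * log (pC (C ω)) := by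
    rw [← Finset.sum_add_distrib, ← Finset.sum_sub_distrib]
    refine Finset.sum_congr rfl fun ω _ => ?_
    rcases (μ.nonneg ω).eq_or_lt with hω | hω
    · simp [← hω]
    have h1 := dist_apply_pos μ hω fun ω => (A ω, C ω)
    have h2 := dist_apply_pos μ hω fun ω => (B ω, C ω)
    have h3 := dist_apply_pos μ hω C
    simp only [Q]
    rw [log_div (mul_pos h1 h2).ne' h3.ne', log_mul h1.ne' h2.ne']
    ring
  have := H_le_neg_sum_mul_log μ _ Q hQ hQ1 hpos
  simp only [H_eq_neg_sum_mul_log] at this ⊢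
  linarith

lemma MI_comp_right_le (A : Ω → α) (B : Ω → β) (g : β → γ) :
    MI μ A (fun ω => g (B ω)) ≤ MI μ A B := by
  have h := H_submodular μ A B fun ω => g (B ω)
  rw [H_comp_eq_of_leftInverse μ (g := fun x : α × β => (x.1, x.2, g x.2))
      (g' := fun y => (y.1, y.2.1)) (fun _ => rfl) fun ω => (A ω, B ω),
    H_comp_eq_of_leftInverse μ (g := fun b => (b, g b)) (g' := Prod.fst) (fun _ => rfl) B] at h
  simp only [MI]
  linarith

lemma H_eq_sum_of_indep {ι : Type} [Fintype ι] [DecidableEq ι] (T : Ω → ι → α)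
    (h : ∀ t, dist μ T t = ∏ j, dist μ (fun ω => T ω j) (t j)) :
    H μ T = ∑ j, H μ (fun ω => T ω j) := by
  simp only [H_eq_neg_sum_mul_log, h, ← Finset.sum_neg_distrib]
  rw [Finset.sum_comm]
  refine Finset.sum_congr rfl fun ω _ => ?_
  rw [Finset.sum_neg_distrib, neg_inj]
  rcases (μ.nonneg ω).eq_or_lt with hω | hω
  · simp [← hω]
  rw [log_prod fun j _ => (dist_apply_pos μ hω fun ω => T ω j).ne', Finset.mul_sum]

lemma sum_MI_prefix_eq {m : ℕ} (W : Ω → γ) (Z : Ω → Fin m → β) :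
    ∑ i : Fin m, MI μ (fun ω => Z ω i)
        (fun ω => (W ω, fun j : Fin i => Z ω (Fin.castLE i.isLt.le j))) =
      ∑ i, H μ (fun ω => Z ω i) + H μ W - H μ (fun ω => (W ω, Z ω)) := by
  induction m with
  | zero =>
    have hZ : (fun ω => (W ω, Z ω)) = fun ω => (W ω, (Fin.elim0 : Fin 0 → β)) :=
      funext fun ω => Prod.ext rfl (Subsingleton.elim _ _)
    rw [hZ, H_comp_eq_of_leftInverse μ (g := fun w => (w, Fin.elim0)) (g' := Prod.fst)
      (fun _ => rfl) W]
    simp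
  | succ m ih =>
    have hinit : ∑ i : Fin m, MI μ (fun ω => Z ω i.castSucc)
        (fun ω => (W ω, fun j : Fin i.castSucc => Z ω (Fin.castLE i.castSucc.isLt.le j))) =
          ∑ i : Fin m, H μ (fun ω => Z ω i.castSucc) + H μ W
            - H μ (fun ω => (W ω, fun j : Fin m => Z ω j.castSucc)) :=
      ih fun ω j => Z ω j.castSucc
    have hsnoc : H μ (fun ω => (Z ω (Fin.last m), (W ω, fun j : Fin m => Z ω j.castSucc))) =
        H μ (fun ω => (W ω, Z ω)) :=
      H_comp_eq_of_leftInverse μ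
        (g := fun p : γ × (Fin (m + 1) → β) => (p.2 (Fin.last m), (p.1, Fin.init p.2)))
        (g' := fun q => (q.2.1, Fin.snoc q.2.2 q.1)) (fun p => by simp) fun ω => (W ω, Z ω)
    have hlast : MI μ (fun ω => Z ω (Fin.last m)) (fun ω =>
          (W ω, fun j : Fin (Fin.last m) => Z ω (Fin.castLE (Fin.last m).isLt.le j))) =
        H μ (fun ω => Z ω (Fin.last m)) + H μ (fun ω => (W ω, fun j : Fin m => Z ω j.castSucc))
          - H μ (fun ω => (W ω, Z ω)) := by
      rw [← hsnoc]
      rfl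
    rw [Fin.sum_univ_castSucc, Fin.sum_univ_castSucc, hinit, hlast]
    ring

end Entropy

section IID

variable {n : ℕ} [DecidableEq β]

lemma dist_iid_map (ν : FinPMF α) (g : α → β) :
    dist (iid ν n) (fun t j => g (t j)) = (iid (push ν g) n).p := by
  funext s
  simp only [dist, iid, push, Fintype.prod_sum, Fintype.prod_ite_zero, funext_iff]
  congr!

variable [DecidableEq α]

lemma dist_iid_eval (ν : FinPMF α) (i : Fin n) : dist (iid ν n) (fun t => t i) = ν.p := by
  funext a
  have hmask : ∀ t : Fin n → α, (if t i = a then ∏ j, ν.p (t j) else 0) =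
      ∏ j, if j = i → t j = a then ν.p (t j) else 0 := by
    intro t
    simp [Fintype.prod_ite_zero]
  simp only [dist, iid, hmask]
  rw [← Fintype.prod_sum fun j b => if j = i → b = a then ν.p b else 0]
  rw [Finset.prod_eq_single i (fun j _ hj => by simp [hj, ν.sum_one]) (by simp)]
  simp

variable {ν : FinPMF α} {T : Ω → Fin n → α}

lemma dist_eval_of_dist_eq_iid (h : dist μ T = (iid ν n).p) (i : Fin n) :
    dist μ (fun ω => T ω i) = ν.p := by
  rw [dist_comp_of_dist_eq μ h fun t => t i, dist_iid_eval]

lemma dist_map_of_dist_eq_iid (h : dist μ T = (iid ν n).p) (g : α → β) :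
    dist μ (fun ω j => g (T ω j)) = (iid (push ν g) n).p := by
  rw [dist_comp_of_dist_eq μ h fun t j => g (t j), dist_iid_map]

lemma H_eq_sum_of_dist_eq_iid (h : dist μ T = (iid ν n).p) :
    H μ T = ∑ j, H μ (fun ω => T ω j) :=
  H_eq_sum_of_indep μ T fun t => by simp [h, iid, dist_eval_of_dist_eq_iid μ h]

lemma H_eq_mul_of_dist_eq_iid (h : dist μ T = (iid ν n).p) (i : Fin n) :
    H μ T = n * H μ (fun ω => T ω i) := by
  have hident : ∀ j, H μ (fun ω => T ω j) = H μ (fun ω => T ω i) := fun j =>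
    H_eq_of_dist_eq μ (by rw [dist_eval_of_dist_eq_iid μ h, dist_eval_of_dist_eq_iid μ h])
  simp [H_eq_sum_of_dist_eq_iid μ h, hident]

end IID

end

/-- Let `(X_1,Y_1), …, (X_n,Y_n)` be i.i.d. pairs of finitely-valued random variables (their
joint distribution is the `n`-fold product of a single-letter pmf `q`, `n ≥ 1`), and let
`F_x = f_x(X^n)`, `F_y = f_y(Y^n)`.  Then
`I(Y^n; F_x, F_y) ≥ I(X^n; F_x, F_y) − n·H(X_1) + Σ_{i=1}^n I(Y_i; X_i, F_y, Y^{i−1})`. -/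
theorem MI_masking_lower_bound {Ω 𝒳 𝒴 : Type} [Fintype Ω] [Fintype 𝒳] [DecidableEq 𝒳]
    [Fintype 𝒴] [DecidableEq 𝒴] {n Mx My : ℕ} (hn : 0 < n)
    (μ : FinPMF Ω) (X : Ω → Fin n → 𝒳) (Y : Ω → Fin n → 𝒴) (q : FinPMF (𝒳 × 𝒴))
    (hiid : ∀ s : Fin n → 𝒳 × 𝒴,
      dist μ (fun ω => fun i => (X ω i, Y ω i)) s = ∏ i, q.p (s i))
    (fx : (Fin n → 𝒳) → Fin Mx) (fy : (Fin n → 𝒴) → Fin My) :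
    MI μ Y (fun ω => (fx (X ω), fy (Y ω))) ≥
      MI μ X (fun ω => (fx (X ω), fy (Y ω))) -
      (n : ℝ) * H μ (fun ω => X ω ⟨0, hn⟩) +
      ∑ i : Fin n, MI μ (fun ω => Y ω i)
        (fun ω => (X ω i, fy (Y ω), fun j : Fin i.val => Y ω (Fin.castLE i.isLt.le j))) := by
  have hZ : dist μ (fun ω i => (X ω i, Y ω i)) = (iid q n).p := funext hiid
  set W := fun ω => (X ω, fy (Y ω))
  have hX : H μ X = n * H μ (fun ω => X ω ⟨0, hn⟩) :=
    H_eq_mul_of_dist_eq_iid μ (dist_map_of_dist_eq_iid μ hZ Prod.fst) _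
  have hY : H μ Y = ∑ i, H μ (fun ω => Y ω i) :=
    H_eq_sum_of_dist_eq_iid μ (dist_map_of_dist_eq_iid μ hZ Prod.snd)
  have hXF : H μ (fun ω => (X ω, (fx (X ω), fy (Y ω)))) = H μ W :=
    H_comp_eq_of_leftInverse μ (g := fun w : (Fin n → 𝒳) × Fin My => (w.1, (fx w.1, w.2)))
      (g' := fun v => (v.1, v.2.2)) (fun _ => rfl) W
  have hYF : H μ (fun ω => (Y ω, (fx (X ω), fy (Y ω)))) ≤ H μ (fun ω => (W ω, Y ω)) :=
    H_comp_le μ (fun ω => (W ω, Y ω)) fun v => (v.2, (fx v.1.1, v.1.2))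
  have hchain := sum_MI_prefix_eq μ W Y
  have hmono : ∑ i : Fin n, MI μ (fun ω => Y ω i)
      (fun ω => (X ω i, fy (Y ω), fun j : Fin i.val => Y ω (Fin.castLE i.isLt.le j))) ≤
        ∑ i : Fin n, MI μ (fun ω => Y ω i)
          (fun ω => (W ω, fun j : Fin i.val => Y ω (Fin.castLE i.isLt.le j))) :=
    Finset.sum_le_sum fun i _ => MI_comp_right_le μ (fun ω => Y ω i)
      (fun ω => (W ω, fun j : Fin i.val => Y ω (Fin.castLE i.isLt.le j)))
      fun v => (v.1.1 i, v.1.2, v.2)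
  rw [ge_iff_le, MI, MI]
  linarith

end FinPMF
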